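/- arXiv:1306.4397 — 3 statements merged into one kernel-verified Lean document; each statement's English description precedes it below -/
import Mathlib

section
/- Proposition 2 (grouping effect of LES): Assume the weights satisfy w_k > 0 for all k and the columns of X have unit Euclidean norm, and set ρ_{ki,kj} = X_{ki}^T X_{kj}. Let β̂ be any minimizer of the LES objective Q. If β̂_{ki} · β̂_{kj} > 0 for two indices i, j in group k, then |β̂_{ki} − β̂_{kj}| ≤ C · √(2(1 − ρ_{ki,kj})), where C = (1/(nλα²w_k)) · √(‖y‖₂² + 2nλ Σ_{l=1}^K w_l log p_l) · exp( ‖y‖₂²/(2nλw_k) + Σ_{l=1}^K (w_l/w_k) log p_l ). -/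
/-!
At a minimiser `β̂` every nonzero coordinate is a point where `Q` is differentiable along that
coordinate, so the partial derivative vanishes:
`n λ w_k α sign(β̂_c) exp(α |β̂_c|) = S_k X_cᵀ r`, with `r = y - X β̂` and
`S_k = ∑ⱼ exp(α |β̂_kj|)`. For `c = ki, kj` the signs agree, so subtracting and using
`|eᵃ - eᵇ| ≥ |a - b|` for `a, b ≥ 0` gives `n λ w_k α² |β̂_ki - β̂_kj| ≤ S_k |(X_ki - X_kj)ᵀ r|`.
Cauchy–Schwarz with `‖X_ki - X_kj‖² = 2 (1 - ρ)` bounds the right side by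
`S_k √(2 (1 - ρ)) ‖r‖`, and comparing `Q(β̂) ≤ Q(0)` (the penalty being nonnegative)
bounds both `‖r‖²` and `log S_k`.
-/

open Finset Real Function

lemma abs_sub_le_abs_exp_sub_exp {x y : ℝ} (hx : 0 ≤ x) (hy : 0 ≤ y) :
    |x - y| ≤ |exp x - exp y| := by
  wlog hyx : y ≤ x generalizing x y
  · rw [abs_sub_comm, abs_sub_comm (exp x)]
    exact this hy hx (le_of_not_ge hyx)
  rw [abs_of_nonneg (sub_nonneg.2 hyx), abs_of_nonneg (sub_nonneg.2 (exp_le_exp.2 hyx))]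
  have hsplit : exp x = exp y * exp (x - y) := by rw [← exp_add, add_sub_cancel]
  nlinarith [add_one_le_exp (x - y), one_le_exp hy]

lemma mul_abs_sub_le_abs_sign_mul_exp_sub {α a b : ℝ} (hα : 0 ≤ α) (hab : 0 < a * b) :
    α * |a - b| ≤
      |(SignType.sign a : ℝ) * exp (α * |a|) - (SignType.sign b : ℝ) * exp (α * |b|)| := by
  have hexp := abs_sub_le_abs_exp_sub_exp (mul_nonneg hα (abs_nonneg a))
    (mul_nonneg hα (abs_nonneg b))
  rw [← mul_sub, abs_mul, abs_of_nonneg hα] at hexp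
  rcases mul_pos_iff.1 hab with ⟨ha, hb⟩ | ⟨ha, hb⟩
  · rw [sign_pos ha, sign_pos hb, abs_of_pos ha, abs_of_pos hb] at *
    simpa using hexp
  · rw [sign_neg ha, sign_neg hb, abs_of_neg ha, abs_of_neg hb] at *
    simp only [SignType.coe_neg, SignType.coe_one, neg_one_mul, neg_sub_neg] at hexp ⊢
    rwa [abs_sub_comm, abs_sub_comm (exp _)]

lemma hasDerivAt_sum_update {ι : Type*} [Fintype ι] [DecidableEq ι] (g : ι → ℝ) (i : ι)
    {f : ℝ → ℝ} {f' x : ℝ} (hf : HasDerivAt f f' x) :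
    HasDerivAt (fun t => ∑ j, update g i (f t) j) f' x := by
  simp only [sum_update_of_mem (mem_univ i)]
  exact hf.add_const _

lemma IsMinOn.hasDerivAt_update_eq_zero {ι : Type*} [DecidableEq ι] {F : (ι → ℝ) → ℝ}
    {β : ι → ℝ} (h : IsMinOn F Set.univ β) {c : ι} {d : ℝ}
    (hd : HasDerivAt (fun t => F (update β c t)) d (β c)) : d = 0 := by
  refine IsLocalMin.hasDerivAt_eq_zero (Filter.Eventually.of_forall fun t => ?_) hd
  simpa only [update_eq_self] using isMinOn_univ_iff.1 h (update β c t)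

section LogSumExp

variable {ι : Type*} [Fintype ι]

noncomputable def logSumExpAbs (α : ℝ) (v : ι → ℝ) : ℝ := log (∑ j, exp (α * |v j|))

lemma logSumExpAbs_nonneg {α : ℝ} (hα : 0 ≤ α) (v : ι → ℝ) : 0 ≤ logSumExpAbs α v := by
  rcases isEmpty_or_nonempty ι with hι | hι
  · simp [logSumExpAbs] -- an empty group contributes `log 0 = 0`
  refine log_nonneg ?_
  calc (1 : ℝ) ≤ Fintype.card ι := by exact_mod_cast Fintype.card_pos
    _ = ∑ _j : ι, (1 : ℝ) := by simp
    _ ≤ ∑ j, exp (α * |v j|) := by gcongr; exact one_le_exp (by positivity)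

lemma exp_logSumExpAbs [Nonempty ι] (α : ℝ) (v : ι → ℝ) :
    exp (logSumExpAbs α v) = ∑ j, exp (α * |v j|) :=
  exp_log (Finset.sum_pos (fun _ _ => exp_pos _) univ_nonempty)

lemma hasDerivAt_logSumExpAbs_update [DecidableEq ι] (α : ℝ) (v : ι → ℝ) {i : ι}
    (hi : v i ≠ 0) :
    HasDerivAt (fun t => logSumExpAbs α (update v i t))
      (α * SignType.sign (v i) * exp (α * |v i|) / ∑ j, exp (α * |v j|)) (v i) := by
  have : Nonempty ι := ⟨i⟩
  set g : ι → ℝ := fun j => exp (α * |v j|)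
  have hg : update g i (exp (α * |v i|)) = g := update_eq_self i g
  have hsum := hasDerivAt_sum_update g i ((hasDerivAt_abs hi).const_mul α).exp
  have hval : ∑ j, update g i (exp (α * |v i|)) j = ∑ j, g j := by rw [hg]
  have hlog := hsum.log (by rw [hval]; positivity)
  convert hlog using 1
  · ext t
    simp only [logSumExpAbs, g, apply_update (fun _ x => exp (α * |x|))]
  · rw [hval]; ring

end LogSumExp

section Residual

variable {n : ℕ} {ι : Type*} [Fintype ι]

def lsResidual (X : Fin n → ι → ℝ) (y : Fin n → ℝ) (β : ι → ℝ) (a : Fin n) : ℝ :=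
  y a - ∑ j, X a j * β j

lemma hasDerivAt_sum_lsResidual_sq_update [DecidableEq ι] (X : Fin n → ι → ℝ) (y : Fin n → ℝ)
    (β : ι → ℝ) (c : ι) :
    HasDerivAt (fun t => ∑ a, lsResidual X y (update β c t) a ^ 2)
      (-2 * ∑ a, X a c * lsResidual X y β a) (β c) := by
  have hlin : ∀ a, HasDerivAt (fun t => ∑ j, X a j * update β c t j) (X a c) (β c) := by
    intro a
    have := HasDerivAt.fun_sum fun j (_ : j ∈ univ) =>
      (hasDerivAt_pi.1 (hasDerivAt_update β c (β c)) j).const_mul (X a j)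
    simpa [Pi.single_apply] using this
  have := HasDerivAt.fun_sum fun a (_ : a ∈ univ) => ((hlin a).const_sub (y a)).fun_pow 2
  simp only [update_eq_self] at this
  refine this.congr_deriv ?_
  rw [mul_sum]
  exact sum_congr rfl fun a _ => by simp only [lsResidual]; ring

end Residual

section Objective

variable {n : ℕ} {κ : Type*} [Fintype κ] {ι : κ → Type*} [∀ k, Fintype (ι k)]
  (X : Fin n → (Σ k, ι k) → ℝ) (y : Fin n → ℝ) (lam α : ℝ) (w : κ → ℝ)

noncomputable def lesObjective (β : (Σ k, ι k) → ℝ) : ℝ :=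
  1 / (2 * (n : ℝ)) * ∑ a, lsResidual X y β a ^ 2
    + lam * ∑ k, w k * logSumExpAbs α (fun j => β ⟨k, j⟩)

lemma lesObjective_zero :
    lesObjective X y lam α w 0 =
      1 / (2 * (n : ℝ)) * ∑ a, y a ^ 2 + lam * ∑ k, w k * log (Fintype.card (ι k)) := by
  simp [lesObjective, lsResidual, logSumExpAbs]

lemma hasDerivAt_lesObjective_update [DecidableEq κ] [∀ k, DecidableEq (ι k)]
    (β : (Σ k, ι k) → ℝ) {k : κ} {i : ι k} (hβ : β ⟨k, i⟩ ≠ 0) :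
    HasDerivAt (fun t => lesObjective X y lam α w (update β ⟨k, i⟩ t))
      (1 / (2 * (n : ℝ)) * (-2 * ∑ a, X a ⟨k, i⟩ * lsResidual X y β a)
        + lam * (w k * (α * SignType.sign (β ⟨k, i⟩) * exp (α * |β ⟨k, i⟩|)
          / ∑ j, exp (α * |β ⟨k, j⟩|)))) (β ⟨k, i⟩) := by
  have hpen := hasDerivAt_sum_update
    (fun l => w l * logSumExpAbs α (Sigma.curry (γ := fun _ _ => ℝ) β l)) k
    ((hasDerivAt_logSumExpAbs_update α (Sigma.curry (γ := fun _ _ => ℝ) β k) hβ).const_mul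
      (w k))
  simp only [← apply_update (fun l v => w l * logSumExpAbs α v),
    ← Sigma.curry_update (γ := fun _ _ => ℝ) ⟨k, i⟩ β] at hpen
  exact ((hasDerivAt_sum_lsResidual_sq_update X y β _).const_mul _).add (hpen.const_mul lam)

end Objective

section Minimizer

variable {n : ℕ} {κ : Type*} [Fintype κ] {ι : κ → Type*} [∀ k, Fintype (ι k)]
  {X : Fin n → (Σ k, ι k) → ℝ} {y : Fin n → ℝ} {lam α : ℝ} {w : κ → ℝ} {β : (Σ k, ι k) → ℝ}

lemma IsMinOn.lesObjective_stationary (hmin : IsMinOn (lesObjective X y lam α w) Set.univ β)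
    (hn : 0 < n) {k : κ} {i : ι k} (hβ : β ⟨k, i⟩ ≠ 0) :
    n * lam * w k * α * SignType.sign (β ⟨k, i⟩) * exp (α * |β ⟨k, i⟩|) =
      (∑ j, exp (α * |β ⟨k, j⟩|)) * ∑ a, X a ⟨k, i⟩ * lsResidual X y β a := by
  classical
  have h0 := hmin.hasDerivAt_update_eq_zero (hasDerivAt_lesObjective_update X y lam α w β hβ)
  have hS : 0 < ∑ j, exp (α * |β ⟨k, j⟩|) := sum_pos (fun _ _ => exp_pos _) ⟨i, mem_univ i⟩
  field_simp at h0
  linear_combination h0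

lemma IsMinOn.lesObjective_grouping (hmin : IsMinOn (lesObjective X y lam α w) Set.univ β)
    (hn : 0 < n) (hlam : 0 ≤ lam) (hα : 0 ≤ α) {k : κ} (hwk : 0 ≤ w k) {i j : ι k}
    (hsign : 0 < β ⟨k, i⟩ * β ⟨k, j⟩) :
    n * lam * w k * α ^ 2 * |β ⟨k, i⟩ - β ⟨k, j⟩| ≤
      (∑ j', exp (α * |β ⟨k, j'⟩|)) *
        |∑ a, (X a ⟨k, i⟩ - X a ⟨k, j⟩) * lsResidual X y β a| := by
  have hi := hmin.lesObjective_stationary hn (left_ne_zero_of_mul hsign.ne')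
  have hj := hmin.lesObjective_stationary hn (right_ne_zero_of_mul hsign.ne')
  have hdiff : n * lam * w k * α * ((SignType.sign (β ⟨k, i⟩) : ℝ) * exp (α * |β ⟨k, i⟩|)
      - SignType.sign (β ⟨k, j⟩) * exp (α * |β ⟨k, j⟩|)) =
      (∑ j', exp (α * |β ⟨k, j'⟩|)) * ∑ a, (X a ⟨k, i⟩ - X a ⟨k, j⟩) * lsResidual X y β a := by
    simp only [sub_mul, sum_sub_distrib]
    linear_combination hi - hj
  have hc : 0 ≤ (n : ℝ) * lam * w k * α := by positivity
  calc (n : ℝ) * lam * w k * α ^ 2 * |β ⟨k, i⟩ - β ⟨k, j⟩|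
      = n * lam * w k * α * (α * |β ⟨k, i⟩ - β ⟨k, j⟩|) := by ring
    _ ≤ n * lam * w k * α * |(SignType.sign (β ⟨k, i⟩) : ℝ) * exp (α * |β ⟨k, i⟩|)
          - SignType.sign (β ⟨k, j⟩) * exp (α * |β ⟨k, j⟩|)| := by
        gcongr
        exact mul_abs_sub_le_abs_sign_mul_exp_sub hα hsign
    _ = _ := by
        rw [← abs_of_nonneg hc, ← abs_mul, hdiff, abs_mul, abs_of_pos]
        exact sum_pos (fun _ _ => exp_pos _) ⟨i, mem_univ i⟩

lemma IsMinOn.lesObjective_le_zero (hmin : IsMinOn (lesObjective X y lam α w) Set.univ β) :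
    1 / (2 * (n : ℝ)) * ∑ a, lsResidual X y β a ^ 2
        + lam * ∑ k, w k * logSumExpAbs α (fun j => β ⟨k, j⟩) ≤
      1 / (2 * (n : ℝ)) * ∑ a, y a ^ 2 + lam * ∑ k, w k * log (Fintype.card (ι k)) :=
  lesObjective_zero X y lam α w ▸ isMinOn_univ_iff.1 hmin 0

lemma IsMinOn.sum_lsResidual_sq_le (hmin : IsMinOn (lesObjective X y lam α w) Set.univ β)
    (hn : 0 < n) (hlam : 0 ≤ lam) (hα : 0 ≤ α) (hw : ∀ k, 0 ≤ w k) :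
    ∑ a, lsResidual X y β a ^ 2 ≤
      ∑ a, y a ^ 2 + 2 * n * lam * ∑ k, w k * log (Fintype.card (ι k)) := by
  have hle := hmin.lesObjective_le_zero
  have hpen : 0 ≤ lam * ∑ k, w k * logSumExpAbs α (fun j => β ⟨k, j⟩) :=
    mul_nonneg hlam (sum_nonneg fun k _ => mul_nonneg (hw k) (logSumExpAbs_nonneg hα _))
  have hn' : (0 : ℝ) < n := by exact_mod_cast hn
  calc ∑ a, lsResidual X y β a ^ 2
      = 2 * n * (1 / (2 * (n : ℝ)) * ∑ a, lsResidual X y β a ^ 2) := by field_simp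
    _ ≤ 2 * n * (1 / (2 * (n : ℝ)) * ∑ a, y a ^ 2
          + lam * ∑ k, w k * log (Fintype.card (ι k))) := by
        gcongr
        linarith
    _ = _ := by field_simp

lemma IsMinOn.logSumExpAbs_le (hmin : IsMinOn (lesObjective X y lam α w) Set.univ β)
    (hlam : 0 < lam) (hα : 0 ≤ α) (hw : ∀ k, 0 ≤ w k) {k : κ} (hwk : 0 < w k) :
    logSumExpAbs α (fun j => β ⟨k, j⟩) ≤
      (∑ a, y a ^ 2) / (2 * n * lam * w k) + ∑ l, w l / w k * log (Fintype.card (ι l)) := by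
  have hle := hmin.lesObjective_le_zero
  have hloss : 0 ≤ 1 / (2 * (n : ℝ)) * ∑ a, lsResidual X y β a ^ 2 := by positivity
  have hk : w k * logSumExpAbs α (fun j => β ⟨k, j⟩) ≤
      ∑ l, w l * logSumExpAbs α (fun j => β ⟨l, j⟩) :=
    single_le_sum (f := fun l => w l * logSumExpAbs α (fun j => β ⟨l, j⟩))
      (fun l _ => mul_nonneg (hw l) (logSumExpAbs_nonneg hα _)) (mem_univ k)
  have hlw : 0 < lam * w k := mul_pos hlam hwk
  calc logSumExpAbs α (fun j => β ⟨k, j⟩)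
      = lam * (w k * logSumExpAbs α (fun j => β ⟨k, j⟩)) / (lam * w k) := by
        field_simp
    _ ≤ (1 / (2 * (n : ℝ)) * ∑ a, y a ^ 2 + lam * ∑ l, w l * log (Fintype.card (ι l)))
          / (lam * w k) := by
        gcongr
        linarith [mul_le_mul_of_nonneg_left hk hlam.le]
    _ = _ := by
        simp only [div_mul_eq_mul_div, ← sum_div]
        field_simp

end Minimizer

lemma abs_sum_mul_le_sqrt_mul_sqrt {ι : Type*} (s : Finset ι) (f g : ι → ℝ) :
    |∑ a ∈ s, f a * g a| ≤ √(∑ a ∈ s, f a ^ 2) * √(∑ a ∈ s, g a ^ 2) := by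
  refine abs_le.2 ⟨?_, sum_mul_le_sqrt_mul_sqrt s f g⟩
  have := sum_mul_le_sqrt_mul_sqrt s (fun a => -f a) g
  simp only [neg_mul, sum_neg_distrib, neg_sq] at this
  linarith

lemma sum_sub_sq_eq_two_mul_one_sub {ι : Type*} {s : Finset ι} {u v : ι → ℝ}
    (hu : ∑ a ∈ s, u a ^ 2 = 1) (hv : ∑ a ∈ s, v a ^ 2 = 1) :
    ∑ a ∈ s, (u a - v a) ^ 2 = 2 * (1 - ∑ a ∈ s, u a * v a) := by
  simp only [sub_sq, sum_add_distrib, sum_sub_distrib, mul_assoc, ← mul_sum, hu, hv]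
  ring

theorem les_grouping_effect_general (n K : ℕ) (hn : 0 < n)
    (p : Fin K → ℕ)
    (X : Fin n → (Σ k : Fin K, Fin (p k)) → ℝ) (y : Fin n → ℝ)
    (lam α : ℝ) (hlam : 0 < lam) (hα : 0 < α)
    (w : Fin K → ℝ) (hw : ∀ k, 0 < w k)
    (hcol : ∀ j : Σ k : Fin K, Fin (p k), ∑ i : Fin n, (X i j) ^ 2 = 1)
    (βh : (Σ k : Fin K, Fin (p k)) → ℝ)
    (hmin : IsMinOn
      (fun β : (Σ k : Fin K, Fin (p k)) → ℝ =>
        (1 / (2 * (n : ℝ))) * ∑ i : Fin n, (y i - ∑ j : Σ k : Fin K, Fin (p k), X i j * β j) ^ 2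
          + lam * ∑ k : Fin K, w k * Real.log (∑ j : Fin (p k), Real.exp (α * |β ⟨k, j⟩|)))
      Set.univ βh)
    (k : Fin K) (i j : Fin (p k))
    (hsign : 0 < βh ⟨k, i⟩ * βh ⟨k, j⟩) :
    |βh ⟨k, i⟩ - βh ⟨k, j⟩| ≤
      ((1 / ((n : ℝ) * lam * α ^ 2 * w k)) *
        Real.sqrt ((∑ i' : Fin n, (y i') ^ 2) +
          2 * (n : ℝ) * lam * ∑ l : Fin K, w l * Real.log (p l)) *
        Real.exp ((∑ i' : Fin n, (y i') ^ 2) / (2 * (n : ℝ) * lam * w k) +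
          ∑ l : Fin K, (w l / w k) * Real.log (p l))) *
      Real.sqrt (2 * (1 - ∑ i' : Fin n, X i' ⟨k, i⟩ * X i' ⟨k, j⟩)) := by
  replace hmin : IsMinOn (lesObjective X y lam α w) Set.univ βh := hmin
  have : Nonempty (Fin (p k)) := ⟨i⟩
  have hw' : ∀ l, 0 ≤ w l := fun l => (hw l).le
  have hgroup := hmin.lesObjective_grouping hn hlam.le hα.le (hw k).le hsign
  have hcs := abs_sum_mul_le_sqrt_mul_sqrt univ (fun a => X a ⟨k, i⟩ - X a ⟨k, j⟩)
    (lsResidual X y βh)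
  rw [sum_sub_sq_eq_two_mul_one_sub (hcol _) (hcol _)] at hcs
  have hres := hmin.sum_lsResidual_sq_le hn hlam.le hα.le hw'
  have hS := exp_le_exp.2 (hmin.logSumExpAbs_le hlam hα.le hw' (hw k))
  simp only [Fintype.card_fin, exp_logSumExpAbs] at hres hS
  have hn' : (0 : ℝ) < n := by exact_mod_cast hn
  have hD : 0 < (n : ℝ) * lam * α ^ 2 * w k := by have := hw k; positivity
  rw [one_div_mul_eq_div, div_mul_eq_mul_div, div_mul_eq_mul_div, le_div_iff₀ hD]
  calc |βh ⟨k, i⟩ - βh ⟨k, j⟩| * (n * lam * α ^ 2 * w k)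
      = n * lam * w k * α ^ 2 * |βh ⟨k, i⟩ - βh ⟨k, j⟩| := by ring
    _ ≤ _ := hgroup
    _ ≤ exp ((∑ a, y a ^ 2) / (2 * n * lam * w k) + ∑ l, w l / w k * log (p l)) *
          (√(2 * (1 - ∑ a, X a ⟨k, i⟩ * X a ⟨k, j⟩)) *
            √(∑ a, y a ^ 2 + 2 * n * lam * ∑ l, w l * log (p l))) := by
        gcongr
        exact hcs.trans (by gcongr)
    _ = _ := by ring

/-- **Proposition 2: the grouping effect of the LES penalty.**
Assume all weights are positive and the columns of `X` have unit Euclidean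
norm, and set `ρ = X kiᵀ X kj`.  If `β̂` is any minimizer of the LES objective
`Q` and `β̂ ki * β̂ kj > 0` for two indices `i j` in group `k`, then
`|β̂ ki - β̂ kj| ≤ C * √(2 (1 - ρ))` with the constant `C` given in the paper. -/
theorem les_grouping_effect (n K : ℕ) (hn : 0 < n) (hK : 0 < K)
    (p : Fin K → ℕ) (hp : ∀ k, 1 ≤ p k)
    (X : Fin n → (Σ k : Fin K, Fin (p k)) → ℝ) (y : Fin n → ℝ)
    (lam α : ℝ) (hlam : 0 < lam) (hα : 0 < α)
    (w : Fin K → ℝ) (hw : ∀ k, 0 < w k)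
    (hcol : ∀ j : Σ k : Fin K, Fin (p k), ∑ i : Fin n, (X i j) ^ 2 = 1)
    (βh : (Σ k : Fin K, Fin (p k)) → ℝ)
    (hmin : IsMinOn
      (fun β : (Σ k : Fin K, Fin (p k)) → ℝ =>
        (1 / (2 * (n : ℝ))) * ∑ i : Fin n, (y i - ∑ j : Σ k : Fin K, Fin (p k), X i j * β j) ^ 2
          + lam * ∑ k : Fin K, w k * Real.log (∑ j : Fin (p k), Real.exp (α * |β ⟨k, j⟩|)))
      Set.univ βh)
    (k : Fin K) (i j : Fin (p k))
    (hsign : 0 < βh ⟨k, i⟩ * βh ⟨k, j⟩) :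
    |βh ⟨k, i⟩ - βh ⟨k, j⟩| ≤
      ((1 / ((n : ℝ) * lam * α ^ 2 * w k)) *
        Real.sqrt ((∑ i' : Fin n, (y i') ^ 2) +
          2 * (n : ℝ) * lam * ∑ l : Fin K, w l * Real.log (p l)) *
        Real.exp ((∑ i' : Fin n, (y i') ^ 2) / (2 * (n : ℝ) * lam * w k) +
          ∑ l : Fin K, (w l / w k) * Real.log (p l))) *
      Real.sqrt (2 * (1 - ∑ i' : Fin n, X i' ⟨k, i⟩ * X i' ⟨k, j⟩)) :=
  les_grouping_effect_general n K hn p X y lam α hlam hα w hw hcol βh hmin k i j hsign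
end

section
/- KKT condition at a zero coordinate: if β̂ is a minimizer of the LES objective Q and β̂_{kj} = 0, then |(1/n)·X_{kj}^T (y − Xβ̂)| ≤ λ α w_k / ( 1 + Σ_{l≠j, 1≤l≤p_k} exp(α|β̂_{kl}|) ). -/
/-! Perturb `β̂` in the single coordinate `(k, j)` to `t`. By minimality the resulting change of `Q`,
`-t S + t² C + λ w_k (log (e^{α|t|} + D) - log (1 + D))` with `D = ∑_{l ≠ j} e^{α|β̂_{kl}|}` and
`S` the quantity to be bounded, is nonnegative for every `t`. Since `log` lies below its tangent at
`1 + D`, the penalty increment is at most `λ w_k α |t| e^{α|t|} / (1 + D)`; dividing by `|t|` and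
letting `t → 0` gives `|S| ≤ λ α w_k / (1 + D)`. -/

open Finset Function Real Filter Topology

section Update

variable {ι : Type*} [Fintype ι] [DecidableEq ι]

theorem sum_apply_update {M : Type*} [AddCommGroup M] {β : ι → Type*} (g : ∀ i, β i → M)
    (f : ∀ i, β i) (i₀ : ι) (v : β i₀) :
    ∑ i, g i (update f i₀ v i) = ∑ i, g i (f i) + (g i₀ v - g i₀ (f i₀)) := by
  simp only [apply_update g]
  rw [sum_update_of_mem (mem_univ i₀), sdiff_singleton_eq_erase, ← add_sum_erase _ _ (mem_univ i₀)]
  abel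

theorem sum_comp_update {M : Type*} [AddCommMonoid M] {α : Type*} (g : α → M) (f : ι → α)
    (i₀ : ι) (v : α) :
    ∑ i, g (update f i₀ v i) = g v + ∑ i ∈ univ.erase i₀, g (f i) := by
  simp only [apply_update (fun _ => g)]
  rw [sum_update_of_mem (mem_univ i₀), sdiff_singleton_eq_erase]

theorem sum_mul_update (a f : ι → ℝ) (i₀ : ι) (t : ℝ) :
    ∑ i, a i * update f i₀ t i = ∑ i, a i * f i + a i₀ * (t - f i₀) := by
  rw [sum_apply_update (fun i x => a i * x), mul_sub]

end Update

noncomputable section Objective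

variable {ι : Type*} [Fintype ι] {n : ℕ}

def leastSquaresLoss (X : Fin n → ι → ℝ) (y : Fin n → ℝ) (β : ι → ℝ) : ℝ :=
  (1 / (2 * (n : ℝ))) * ∑ i : Fin n, (y i - ∑ j, X i j * β j) ^ 2

theorem leastSquaresLoss_update [DecidableEq ι] (X : Fin n → ι → ℝ) (y : Fin n → ℝ)
    (β : ι → ℝ) (i₀ : ι) (t : ℝ) :
    leastSquaresLoss X y (update β i₀ t) = leastSquaresLoss X y β
      - (t - β i₀) * ((1 / (n : ℝ)) * ∑ i, X i i₀ * (y i - ∑ j, X i j * β j))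
      + (t - β i₀) ^ 2 * ((1 / (2 * (n : ℝ))) * ∑ i, X i i₀ ^ 2) := by
  have hsq : ∀ i s, (y i - (∑ j, X i j * β j + X i i₀ * s)) ^ 2 = (y i - ∑ j, X i j * β j) ^ 2
      - 2 * s * (X i i₀ * (y i - ∑ j, X i j * β j)) + s ^ 2 * X i i₀ ^ 2 := fun i s => by ring
  simp only [leastSquaresLoss, sum_mul_update, hsq, sum_add_distrib, sum_sub_distrib, ← mul_sum]
  ring

variable {κ : Type*} [Fintype κ] {G : κ → Type*} [∀ l, Fintype (G l)]

def lesPenalty (α : ℝ) (w : κ → ℝ) (β : (Σ l, G l) → ℝ) : ℝ :=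
  ∑ l, w l * log (∑ j, exp (α * |β ⟨l, j⟩|))

theorem lesPenalty_update [DecidableEq κ] [∀ l, DecidableEq (G l)] (α : ℝ) (w : κ → ℝ)
    (β : (Σ l, G l) → ℝ) (k : κ) (j : G k) (t : ℝ) :
    lesPenalty α w (update β ⟨k, j⟩ t) = lesPenalty α w β
      + w k * (log (exp (α * |t|) + ∑ l ∈ univ.erase j, exp (α * |β ⟨k, l⟩|))
        - log (exp (α * |β ⟨k, j⟩|) + ∑ l ∈ univ.erase j, exp (α * |β ⟨k, l⟩|))) := by
  change ∑ l, w l * log (∑ j', exp (α * |Sigma.curry (γ := fun _ _ => ℝ)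
    (update β ⟨k, j⟩ t) l j'|)) = _
  rw [Sigma.curry_update,
    sum_apply_update (fun l (v : G l → ℝ) => w l * log (∑ j', exp (α * |v j'|))),
    sum_comp_update (fun x => exp (α * |x|)), ← add_sum_erase _ _ (mem_univ j), mul_sub]
  rfl

end Objective

theorem exp_sub_one_le_mul_exp (x : ℝ) : exp x - 1 ≤ x * exp x := by
  have h := mul_le_mul_of_nonneg_left (add_one_le_exp (-x)) (exp_pos x).le
  rw [← exp_add, add_neg_cancel, exp_zero] at h
  linarith

theorem log_exp_add_sub_log_one_add_le (x : ℝ) {D : ℝ} (hD : 0 ≤ D) :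
    log (exp x + D) - log (1 + D) ≤ x * exp x / (1 + D) := by
  have hD₁ : 0 < 1 + D := by linarith
  calc log (exp x + D) - log (1 + D) = log ((exp x + D) / (1 + D)) :=
        (log_div (by positivity) hD₁.ne').symm
    _ ≤ (exp x + D) / (1 + D) - 1 := log_le_sub_one_of_pos (by positivity)
    _ = (exp x - 1) / (1 + D) := by field_simp; ring
    _ ≤ x * exp x / (1 + D) := by gcongr; exact exp_sub_one_le_mul_exp x

theorem abs_le_of_forall_mul_le {S C c α D : ℝ} (hc : 0 ≤ c) (hD : 0 ≤ D)
    (h : ∀ t, t * S ≤ t ^ 2 * C + c * (log (exp (α * |t|) + D) - log (1 + D))) :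
    |S| ≤ c * α / (1 + D) := by
  have hbound : ∀ t > 0, |S| ≤ t * C + c * (α * exp (α * t) / (1 + D)) := by
    intro t ht
    have hpen : c * (log (exp (α * t) + D) - log (1 + D)) ≤ t * (c * (α * exp (α * t) / (1 + D))) :=
      calc _ ≤ c * (α * t * exp (α * t) / (1 + D)) :=
            mul_le_mul_of_nonneg_left (log_exp_add_sub_log_one_add_le _ hD) hc
        _ = _ := by ring
    have hpos := h t
    have hneg := h (-t)
    rw [abs_of_pos ht] at hpos
    rw [abs_neg, abs_of_pos ht] at hneg
    rw [abs_le']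
    constructor <;> refine le_of_mul_le_mul_left ?_ ht <;> linarith
  have hlim : Tendsto (fun t => t * C + c * (α * exp (α * t) / (1 + D))) (𝓝[>] 0)
      (𝓝 (c * α / (1 + D))) := by
    have hcont : Continuous fun t => t * C + c * (α * exp (α * t) / (1 + D)) := by fun_prop
    convert hcont.continuousAt.tendsto.mono_left nhdsWithin_le_nhds using 2
    simp only [zero_mul, zero_add, mul_zero, exp_zero, mul_one, mul_div_assoc]
  exact ge_of_tendsto hlim (eventually_nhdsWithin_of_forall hbound)

theorem les_kkt_zero_general (n K : ℕ)
    (p : Fin K → ℕ)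
    (X : Fin n → (Σ k : Fin K, Fin (p k)) → ℝ) (y : Fin n → ℝ)
    (lam α : ℝ) (hlam : 0 < lam)
    (w : Fin K → ℝ) (hw : ∀ k, 0 ≤ w k)
    (βh : (Σ k : Fin K, Fin (p k)) → ℝ)
    (hmin : IsMinOn
      (fun β : (Σ k : Fin K, Fin (p k)) → ℝ =>
        (1 / (2 * (n : ℝ))) * ∑ i : Fin n, (y i - ∑ j' : Σ k : Fin K, Fin (p k), X i j' * β j') ^ 2
          + lam * ∑ l : Fin K, w l * Real.log (∑ j' : Fin (p l), Real.exp (α * |β ⟨l, j'⟩|)))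
      Set.univ βh)
    (k : Fin K) (j : Fin (p k)) (hzero : βh ⟨k, j⟩ = 0) :
    |(1 / (n : ℝ)) * ∑ i : Fin n,
        X i ⟨k, j⟩ * (y i - ∑ j' : Σ k : Fin K, Fin (p k), X i j' * βh j')| ≤
      lam * α * w k /
        (1 + ∑ l ∈ Finset.univ.erase j, Real.exp (α * |βh ⟨k, l⟩|)) := by
  have hmin' : IsMinOn (fun β => leastSquaresLoss X y β + lam * lesPenalty α w β) Set.univ βh :=
    hmin
  have hD : 0 ≤ ∑ l ∈ univ.erase j, exp (α * |βh ⟨k, l⟩|) := sum_nonneg fun _ _ => (exp_pos _).le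
  rw [mul_right_comm]
  refine abs_le_of_forall_mul_le (C := (1 / (2 * (n : ℝ))) * ∑ i, X i ⟨k, j⟩ ^ 2)
    (mul_nonneg hlam.le (hw k)) hD fun t => ?_
  have hle := isMinOn_iff.mp hmin' (update βh ⟨k, j⟩ t) (Set.mem_univ _)
  rw [leastSquaresLoss_update, lesPenalty_update, hzero] at hle
  simp only [sub_zero, abs_zero, mul_zero, exp_zero] at hle
  linarith

/-- **KKT condition at a zero coordinate.**
If `β̂` is a minimizer of the LES objective `Q` and `β̂ kj = 0`, then
`|(1/n) X kjᵀ (y - X β̂)| ≤ λ α w k / (1 + ∑_{l ≠ j} exp (α |β̂ kl|))`. -/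
theorem les_kkt_zero (n K : ℕ) (hn : 0 < n) (hK : 0 < K)
    (p : Fin K → ℕ) (hp : ∀ k, 1 ≤ p k)
    (X : Fin n → (Σ k : Fin K, Fin (p k)) → ℝ) (y : Fin n → ℝ)
    (lam α : ℝ) (hlam : 0 < lam) (hα : 0 < α)
    (w : Fin K → ℝ) (hw : ∀ k, 0 ≤ w k)
    (βh : (Σ k : Fin K, Fin (p k)) → ℝ)
    (hmin : IsMinOn
      (fun β : (Σ k : Fin K, Fin (p k)) → ℝ =>
        (1 / (2 * (n : ℝ))) * ∑ i : Fin n, (y i - ∑ j' : Σ k : Fin K, Fin (p k), X i j' * β j') ^ 2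
          + lam * ∑ l : Fin K, w l * Real.log (∑ j' : Fin (p l), Real.exp (α * |β ⟨l, j'⟩|)))
      Set.univ βh)
    (k : Fin K) (j : Fin (p k)) (hzero : βh ⟨k, j⟩ = 0) :
    |(1 / (n : ℝ)) * ∑ i : Fin n,
        X i ⟨k, j⟩ * (y i - ∑ j' : Σ k : Fin K, Fin (p k), X i j' * βh j')| ≤
      lam * α * w k /
        (1 + ∑ l ∈ Finset.univ.erase j, Real.exp (α * |βh ⟨k, l⟩|)) :=
  les_kkt_zero_general n K p X y lam α hlam w hw βh hmin k j hzero
end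

section
/- Basic inequality for the LES estimator (deterministic form of the appendix Lemma): assume y = Xβ* + ε with (2/n)·max_{k,j} |X_{kj}^T ε| ≤ γ, where γ = λα. Then for every minimizer β̂ of Q and every β ∈ ℝ^p: (1/n)‖X(β̂ − β*)‖₂² + γ‖β̂ − β‖₁ ≤ (1/n)‖X(β − β*)‖₂² + 2γ Σ_{k ∈ G(β)} (1 + p_k) ‖β̂_k − β_k‖₁. -/
/-!
Compare the objective at the minimizer `β̂` with its value at `β`. Expanding the squares around
`β*`, the residual sums of squares differ by the prediction errors plus a cross term
`(2/n) ∑ (X_jᵀ ε)(β̂_j - β_j)`, which the noise condition bounds by `γ ‖β̂ - β‖₁`.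
The penalty `p_k log ∑ exp(α|·|)` of a group is `α p_k`-Lipschitz for the `ℓ₁` norm, which handles
the groups in `G(β)`; on a group where `β_k = 0` its value is `p_k log p_k`, and Jensen's inequality
`log ∑ exp x ≥ log p_k + (∑ x)/p_k` shows that `β̂_k` pays at least `α ‖β̂_k‖₁` more there.
Adding `γ ‖β̂ - β‖₁` to both sides gives the claim.
-/

open Real Finset Fintype

theorem sum_sq_residual_sub_sum_sq_residual {m ι : Type*} [Fintype m] [Fintype ι]
    (X : m → ι → ℝ) (βstar : ι → ℝ) (ε y : m → ℝ)
    (hmodel : ∀ i, y i = (∑ j, X i j * βstar j) + ε i) (a b : ι → ℝ) :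
    ∑ i, (y i - ∑ j, X i j * a j) ^ 2 - ∑ i, (y i - ∑ j, X i j * b j) ^ 2 =
      ∑ i, (∑ j, X i j * (a j - βstar j)) ^ 2 - ∑ i, (∑ j, X i j * (b j - βstar j)) ^ 2
        - 2 * ∑ j, (∑ i, X i j * ε i) * (a j - b j) := by
  have hsplit : ∀ v : ι → ℝ, ∀ i,
      ∑ j, X i j * (v j - βstar j) = ∑ j, X i j * v j - ∑ j, X i j * βstar j := by
    simp only [mul_sub, Finset.sum_sub_distrib, implies_true]
  have hcross : ∑ j, (∑ i, X i j * ε i) * (a j - b j) =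
      ∑ i, ε i * ((∑ j, X i j * a j) - ∑ j, X i j * b j) := by
    simp only [Finset.sum_mul, Finset.mul_sum, ← Finset.sum_sub_distrib]
    rw [Finset.sum_comm]
    exact Finset.sum_congr rfl fun i _ => Finset.sum_congr rfl fun j _ => by ring
  rw [hcross, Finset.mul_sum, ← Finset.sum_sub_distrib, ← Finset.sum_sub_distrib,
    ← Finset.sum_sub_distrib]
  simp only [hsplit, hmodel]
  exact Finset.sum_congr rfl fun i _ => by ring

theorem mul_sum_mul_le_mul_sum_abs {ι : Type*} [Fintype ι] {c γ : ℝ} (hc : 0 ≤ c)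
    (g d : ι → ℝ) (hg : ∀ j, c * |g j| ≤ γ) :
    c * ∑ j, g j * d j ≤ γ * ∑ j, |d j| := by
  rw [Finset.mul_sum, Finset.mul_sum]
  refine Finset.sum_le_sum fun j _ => ?_
  calc c * (g j * d j) ≤ c * |g j| * |d j| := by
        rw [mul_assoc, ← abs_mul]; exact mul_le_mul_of_nonneg_left (le_abs_self _) hc
    _ ≤ γ * |d j| := mul_le_mul_of_nonneg_right (hg j) (abs_nonneg _)

theorem log_sum_exp_le_add_sum_abs_sub {ι : Type*} [Fintype ι] (u v : ι → ℝ) :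
    log (∑ i, exp (u i)) ≤ log (∑ i, exp (v i)) + ∑ i, |u i - v i| := by
  rcases isEmpty_or_nonempty ι with hι | hι
  · simp
  set M := ∑ i, |u i - v i|
  have hle : ∑ i, exp (u i) ≤ exp M * ∑ i, exp (v i) := by
    rw [Finset.mul_sum]
    refine Finset.sum_le_sum fun i _ => ?_
    rw [← exp_add, exp_le_exp]
    have := Finset.single_le_sum (fun j _ => abs_nonneg (u j - v j)) (Finset.mem_univ i)
    linarith [le_abs_self (u i - v i)]
  have hv : 0 < ∑ i, exp (v i) := by positivity
  calc log (∑ i, exp (u i)) ≤ log (exp M * ∑ i, exp (v i)) :=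
        log_le_log (by positivity) hle
    _ = log (∑ i, exp (v i)) + M := by
        rw [log_mul (exp_ne_zero _) hv.ne', log_exp, add_comm]

theorem card_mul_log_card_add_sum_le {ι : Type*} [Fintype ι] (x : ι → ℝ) :
    card ι * log (card ι) + ∑ i, x i ≤ card ι * log (∑ i, exp (x i)) := by
  rcases isEmpty_or_nonempty ι with hι | hι
  · simp
  have hm : (0 : ℝ) < card ι := by exact_mod_cast Fintype.card_pos
  have hjensen : exp (∑ i, (card ι : ℝ)⁻¹ * x i) ≤ ∑ i, (card ι : ℝ)⁻¹ * exp (x i) :=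
    convexOn_exp.map_sum_le (fun _ _ => by positivity) (by simp [hm.ne'])
      (fun _ _ => Set.mem_univ _)
  have hsum : 0 < ∑ i, exp (x i) := by positivity
  rw [← Finset.mul_sum, ← Finset.mul_sum, ← log_le_log_iff (exp_pos _) (by positivity),
    log_exp, log_mul (inv_ne_zero hm.ne') hsum.ne', log_inv] at hjensen
  have := mul_le_mul_of_nonneg_left hjensen hm.le
  rw [← mul_assoc, mul_inv_cancel₀ hm.ne'] at this
  linarith

theorem card_mul_log_sum_exp_abs_sub_le {ι : Type*} [Fintype ι] {α : ℝ} (hα : 0 ≤ α)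
    (a b : ι → ℝ) :
    card ι * log (∑ i, exp (α * |b i|)) - card ι * log (∑ i, exp (α * |a i|)) ≤
      α * (card ι * ∑ i, |a i - b i|) := by
  have hlip := log_sum_exp_le_add_sum_abs_sub (fun i => α * |b i|) (fun i => α * |a i|)
  have hterm : ∑ i, abs (α * |b i| - α * |a i|) ≤ α * ∑ i, |a i - b i| := by
    rw [Finset.mul_sum]
    refine Finset.sum_le_sum fun i _ => ?_
    rw [← mul_sub, abs_mul, abs_of_nonneg hα, abs_sub_comm (a i)]
    exact mul_le_mul_of_nonneg_left (abs_abs_sub_abs_le_abs_sub _ _) hα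
  have := mul_le_mul_of_nonneg_left (hlip.trans (add_le_add_right hterm _))
    (Nat.cast_nonneg (card ι) : (0 : ℝ) ≤ card ι)
  linarith

theorem card_mul_log_card_sub_le (ι : Type*) [Fintype ι] (α : ℝ) (a : ι → ℝ) :
    card ι * log (card ι) - card ι * log (∑ i, exp (α * |a i|)) ≤ -(α * ∑ i, |a i|) := by
  have := card_mul_log_card_add_sum_le (fun i => α * |a i|)
  rw [← Finset.mul_sum] at this
  linarith

theorem sum_card_mul_log_sum_exp_sub_le {κ : Type*} [Fintype κ] [DecidableEq κ]
    {ι : κ → Type*} [∀ k, Fintype (ι k)] {α : ℝ} (hα : 0 ≤ α) (a b : (Σ k, ι k) → ℝ)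
    (G : Finset κ) (hb : ∀ k ∉ G, ∀ j, b ⟨k, j⟩ = 0) :
    ∑ k, card (ι k) * log (∑ j, exp (α * |b ⟨k, j⟩|))
        - ∑ k, card (ι k) * log (∑ j, exp (α * |a ⟨k, j⟩|)) ≤
      α * (∑ k ∈ G, card (ι k) * ∑ j, |a ⟨k, j⟩ - b ⟨k, j⟩|
        - ∑ k ∈ Gᶜ, ∑ j, |a ⟨k, j⟩ - b ⟨k, j⟩|) := by
  rw [← Finset.sum_sub_distrib, ← Finset.sum_add_sum_compl G, mul_sub, Finset.mul_sum,
    Finset.mul_sum, sub_eq_add_neg, ← Finset.sum_neg_distrib]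
  refine add_le_add (Finset.sum_le_sum fun k _ => card_mul_log_sum_exp_abs_sub_le hα _ _)
    (Finset.sum_le_sum fun k hk => ?_)
  have hbk : ∀ j, b ⟨k, j⟩ = 0 := hb k (Finset.mem_compl.1 hk)
  simpa [hbk] using card_mul_log_card_sub_le (ι k) α (fun j => a ⟨k, j⟩)

theorem les_basic_inequality_general (n K : ℕ)
    (p : Fin K → ℕ)
    (X : Fin n → (Σ k : Fin K, Fin (p k)) → ℝ)
    (βstar : (Σ k : Fin K, Fin (p k)) → ℝ) (ε y : Fin n → ℝ)
    (hmodel : ∀ i, y i = (∑ j : Σ k : Fin K, Fin (p k), X i j * βstar j) + ε i)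
    (lam α : ℝ) (hlam : 0 < lam) (hα : 0 < α)
    (hnoise : ∀ j : Σ k : Fin K, Fin (p k),
      (2 / (n : ℝ)) * |∑ i : Fin n, X i j * ε i| ≤ lam * α)
    (βh : (Σ k : Fin K, Fin (p k)) → ℝ)
    (hmin : IsMinOn
      (fun β : (Σ k : Fin K, Fin (p k)) → ℝ =>
        (1 / (2 * (n : ℝ))) * ∑ i : Fin n, (y i - ∑ j : Σ k : Fin K, Fin (p k), X i j * β j) ^ 2
          + lam * ∑ k : Fin K, (p k : ℝ) * Real.log (∑ j : Fin (p k), Real.exp (α * |β ⟨k, j⟩|)))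
      Set.univ βh)
    (β : (Σ k : Fin K, Fin (p k)) → ℝ)
    (G : Finset (Fin K)) (hG : ∀ k, k ∈ G ↔ ∃ j : Fin (p k), β ⟨k, j⟩ ≠ 0) :
    (1 / (n : ℝ)) * (∑ i : Fin n, (∑ j : Σ k : Fin K, Fin (p k), X i j * (βh j - βstar j)) ^ 2)
        + lam * α * ∑ j : Σ k : Fin K, Fin (p k), |βh j - β j| ≤
      (1 / (n : ℝ)) * (∑ i : Fin n, (∑ j : Σ k : Fin K, Fin (p k), X i j * (β j - βstar j)) ^ 2)
        + 2 * (lam * α) * ∑ k ∈ G, (1 + (p k : ℝ)) * ∑ j : Fin (p k), |βh ⟨k, j⟩ - β ⟨k, j⟩| := by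
  have hQ := isMinOn_iff.1 hmin β (Set.mem_univ β)
  have hrss := sum_sq_residual_sub_sum_sq_residual X βstar ε y hmodel βh β
  have hcross := mul_sum_mul_le_mul_sum_abs (by positivity) _ (fun j => βh j - β j) hnoise
  have hβ : ∀ k ∉ G, ∀ j, β ⟨k, j⟩ = 0 := fun k hk j => by
    by_contra h; exact hk ((hG k).2 ⟨j, h⟩)
  have hpen := sum_card_mul_log_sum_exp_sub_le hα.le βh β G hβ
  simp only [Fintype.card_fin] at hpen
  have hpen' := mul_le_mul_of_nonneg_left hpen (by positivity : (0 : ℝ) ≤ 2 * lam)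
  have hl1 : ∑ j : Σ k : Fin K, Fin (p k), |βh j - β j| =
      ∑ k ∈ G, ∑ j : Fin (p k), |βh ⟨k, j⟩ - β ⟨k, j⟩|
        + ∑ k ∈ Gᶜ, ∑ j : Fin (p k), |βh ⟨k, j⟩ - β ⟨k, j⟩| := by
    rw [Fintype.sum_sigma, Finset.sum_add_sum_compl]
  simp only [add_mul, one_mul, Finset.sum_add_distrib]
  linear_combination 2 * hQ + hcross + hpen' - (1 / (n : ℝ)) * hrss + 2 * lam * α * hl1

/-- **Basic inequality for the LES estimator** (deterministic form of the
appendix Lemma).  Assume `y = X β* + ε` with `(2/n) max_{k,j} |X kjᵀ ε| ≤ γ`,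
where `γ = λ α` and the weights are `w k = p k`.  Then for every minimizer `β̂`
of `Q` and every `β ∈ ℝ^p`,
`(1/n) ‖X (β̂ - β*)‖₂² + γ ‖β̂ - β‖₁
  ≤ (1/n) ‖X (β - β*)‖₂² + 2 γ ∑_{k ∈ G(β)} (1 + p k) ‖β̂ k - β k‖₁`. -/
theorem les_basic_inequality (n K : ℕ) (hn : 0 < n) (hK : 0 < K)
    (p : Fin K → ℕ) (hp : ∀ k, 1 ≤ p k)
    (X : Fin n → (Σ k : Fin K, Fin (p k)) → ℝ)
    (βstar : (Σ k : Fin K, Fin (p k)) → ℝ) (ε y : Fin n → ℝ)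
    (hmodel : ∀ i, y i = (∑ j : Σ k : Fin K, Fin (p k), X i j * βstar j) + ε i)
    (lam α : ℝ) (hlam : 0 < lam) (hα : 0 < α)
    (hnoise : ∀ j : Σ k : Fin K, Fin (p k),
      (2 / (n : ℝ)) * |∑ i : Fin n, X i j * ε i| ≤ lam * α)
    (βh : (Σ k : Fin K, Fin (p k)) → ℝ)
    (hmin : IsMinOn
      (fun β : (Σ k : Fin K, Fin (p k)) → ℝ =>
        (1 / (2 * (n : ℝ))) * ∑ i : Fin n, (y i - ∑ j : Σ k : Fin K, Fin (p k), X i j * β j) ^ 2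
          + lam * ∑ k : Fin K, (p k : ℝ) * Real.log (∑ j : Fin (p k), Real.exp (α * |β ⟨k, j⟩|)))
      Set.univ βh)
    (β : (Σ k : Fin K, Fin (p k)) → ℝ)
    (G : Finset (Fin K)) (hG : ∀ k, k ∈ G ↔ ∃ j : Fin (p k), β ⟨k, j⟩ ≠ 0) :
    (1 / (n : ℝ)) * (∑ i : Fin n, (∑ j : Σ k : Fin K, Fin (p k), X i j * (βh j - βstar j)) ^ 2)
        + lam * α * ∑ j : Σ k : Fin K, Fin (p k), |βh j - β j| ≤
      (1 / (n : ℝ)) * (∑ i : Fin n, (∑ j : Σ k : Fin K, Fin (p k), X i j * (β j - βstar j)) ^ 2)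
        + 2 * (lam * α) * ∑ k ∈ G, (1 + (p k : ℝ)) * ∑ j : Fin (p k), |βh ⟨k, j⟩ - β ⟨k, j⟩| :=
  les_basic_inequality_general n K p X βstar ε y hmodel lam α hlam hα hnoise βh hmin β G hG
end
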